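/- Let (M,d) be a metric space and X a Banach space. Let α ≥ 0 and let φ : M ⇉ X be a correspondence that is non-empty-valued, closed-valued, and convex-valued, and that admits local strongly pointwise α-Lipschitz selections. If φ has a bounded continuous selection, then for every β > α there exist a bounded continuous selection f : M → X of φ and a set B ⊆ M that is dense in M such that f is pointwise β-Lipschitz at every point of B. -/

import Mathlib

open Filter Metric Set

/-- `f` is pointwise `α`-Lipschitz at `b`:
`limsup_{r→0⁺} ( r⁻¹ · sup { d(f b, f a) : a ∈ closedBall b r } ) ≤ α`. -/
noncomputable def PtwiseLipschitzAt {M X : Type*} [PseudoMetricSpace M] [PseudoMetricSpace X]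
    (f : M → X) (α : ℝ) (b : M) : Prop :=
  Filter.limsup
    (fun r : ℝ => (ENNReal.ofReal r)⁻¹ * ⨆ a ∈ Metric.closedBall b r, edist (f b) (f a))
    (nhdsWithin 0 (Set.Ioi 0)) ≤ ENNReal.ofReal α

/-- `φ` admits local strongly pointwise `α`-Lipschitz selections. -/
def AdmitsLocalStronglyPtwiseLipschitzSelections {M X : Type*} [MetricSpace M]
    [NormedAddCommGroup X] (φ : M → Set X) (α : ℝ) : Prop :=
  ∀ b : M, ∀ y ∈ φ b, ∃ U : Set M, IsOpen U ∧ b ∈ U ∧ ∃ f : M → X,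
    Continuous f ∧ (∀ a, f a ∈ φ a) ∧ f b = y ∧ ∀ a ∈ U, ‖f b - f a‖ ≤ α * dist b a

/-!
Starting from the bounded selection `g = F 0`, build continuous selections `F m` with
`‖F (m + 1) - F m‖ ≤ 2⁻¹ ^ (m + 1)`. Around each point `x` outside the closure of the set `E m`
treated so far, splice into `F m`, by a cutoff on a small ball, a local `α`-Lipschitz selection
through `F m x`; convexity of the values keeps the result a selection. Vitali's covering lemma
picks pairwise disjoint such balls whose centres `N m` are `2⁻¹ ^ m`-dense off `E m`, and
`E (m + 1) = E m ∪ N m`. The balls are so small that the correction at `a` is at most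
`(β - α) / 2 ^ (m + 1) * dist a e` for every `e ∈ E m`; summed over all later stages, `F m a` moves
by at most `(β - α) * dist a e`. So at a centre `b ∈ N m`, where `F (m + 1)` is `α`-Lipschitz, the
uniform limit is pointwise `β`-Lipschitz, and the centres are dense.
-/

open Topology

section BallBump

variable {M : Type*} [PseudoMetricSpace M]

noncomputable def ballBump (c : M) (ρ : ℝ) (a : M) : ℝ := max 0 (min 1 (2 - 2 * dist a c / ρ))

lemma ballBump_nonneg (c : M) (ρ : ℝ) (a : M) : 0 ≤ ballBump c ρ a := le_max_left _ _

lemma ballBump_le_one (c : M) (ρ : ℝ) (a : M) : ballBump c ρ a ≤ 1 :=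
  max_le zero_le_one (min_le_left _ _)

lemma continuous_ballBump (c : M) (ρ : ℝ) : Continuous (ballBump c ρ) := by
  unfold ballBump
  fun_prop

lemma ballBump_eq_one {c a : M} {ρ : ℝ} (hρ : 0 < ρ) (ha : dist a c ≤ ρ / 2) :
    ballBump c ρ a = 1 := by
  have h : 1 ≤ 2 - 2 * dist a c / ρ := by
    rw [le_sub_comm, div_le_iff₀ hρ]
    linarith
  rw [ballBump, min_eq_left h, max_eq_right zero_le_one]

lemma ballBump_eq_zero {c a : M} {ρ : ℝ} (hρ : 0 < ρ) (ha : ρ ≤ dist a c) :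
    ballBump c ρ a = 0 := by
  have h : 2 - 2 * dist a c / ρ ≤ 0 := by
    rw [sub_nonpos, le_div_iff₀ hρ]
    linarith
  exact max_eq_left ((min_le_right _ _).trans h)

lemma ballBump_le_of_le_dist {c a x : M} {ρ : ℝ} (hρ : 0 < ρ) (hx : ρ ≤ dist x c) :
    ballBump c ρ a ≤ 2 * dist a x / ρ := by
  have h : 2 - 2 * dist a c / ρ ≤ 2 * dist a x / ρ := by
    rw [sub_le_iff_le_add, ← add_div, le_div_iff₀ hρ]
    linarith [dist_triangle x a c, dist_comm x a]
  exact max_le (by positivity) ((min_le_right _ _).trans h)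

end BallBump

section Patches

variable {M X : Type*} [PseudoMetricSpace M] [NormedAddCommGroup X]

structure Patch (α : ℝ) (φ : M → Set X) (f : M → X) (E : Set M) (δ c : ℝ) where
  center : M
  radius : ℝ
  sel : M → X
  radius_pos : 0 < radius
  radius_le : radius ≤ δ
  continuous_sel : Continuous sel
  sel_mem : ∀ a, sel a ∈ φ a
  sel_center : sel center = f center
  norm_sel_sub_sel_center_le :
    ∀ a ∈ ball center radius, ‖sel a - sel center‖ ≤ α * dist a center
  norm_sel_sub_le : ∀ a ∈ ball center radius, ‖sel a - f a‖ ≤ δ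
  norm_sel_sub_le_mul_dist : ∀ e ∈ E, ∀ a ∈ ball center radius, ‖sel a - f a‖ ≤ c * dist a e

namespace Patch

variable {α : ℝ} {φ : M → Set X} {f : M → X} {E : Set M} {δ c : ℝ} (p : Patch α φ f E δ c)

lemma norm_sel_sub_le_add (hα : 0 ≤ α) {a : M} (ha : a ∈ ball p.center p.radius) :
    ‖p.sel a - f a‖ ≤ α * p.radius + dist (f p.center) (f a) := by
  calc ‖p.sel a - f a‖ = ‖(p.sel a - p.sel p.center) + (f p.center - f a)‖ := by
        rw [p.sel_center]; abel_nf
    _ ≤ ‖p.sel a - p.sel p.center‖ + dist (f p.center) (f a) := by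
        rw [dist_eq_norm]; exact norm_add_le _ _
    _ ≤ α * p.radius + dist (f p.center) (f a) := by
        gcongr
        exact (p.norm_sel_sub_sel_center_le a ha).trans
          (mul_le_mul_of_nonneg_left (mem_ball.1 ha).le hα)

variable [NormedSpace ℝ X]

noncomputable def blend (a : M) : X := f a + ballBump p.center p.radius a • (p.sel a - f a)

lemma continuous_blend (hf : Continuous f) : Continuous p.blend :=
  hf.add ((continuous_ballBump _ _).smul (p.continuous_sel.sub hf))

lemma blend_mem (hcv : ∀ a, Convex ℝ (φ a)) (hfs : ∀ a, f a ∈ φ a) (a : M) : p.blend a ∈ φ a :=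
  (hcv a).add_smul_sub_mem (hfs a) (p.sel_mem a) ⟨ballBump_nonneg _ _ _, ballBump_le_one _ _ _⟩

lemma norm_blend_sub (a : M) :
    ‖p.blend a - f a‖ = ballBump p.center p.radius a * ‖p.sel a - f a‖ := by
  rw [blend, add_sub_cancel_left, norm_smul, Real.norm_of_nonneg (ballBump_nonneg _ _ _)]

lemma norm_blend_sub_le (a : M) : ‖p.blend a - f a‖ ≤ ‖p.sel a - f a‖ := by
  rw [norm_blend_sub]
  exact mul_le_of_le_one_left (norm_nonneg _) (ballBump_le_one _ _ _)

lemma blend_eq_sel {a : M} (ha : dist a p.center ≤ p.radius / 2) : p.blend a = p.sel a := by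
  rw [blend, ballBump_eq_one p.radius_pos ha, one_smul, add_sub_cancel]

lemma blend_eq_self {a : M} (ha : a ∉ ball p.center p.radius) : p.blend a = f a := by
  rw [blend, ballBump_eq_zero p.radius_pos (not_lt.1 ha), zero_smul, add_zero]

lemma norm_blend_sub_le_of_le_dist (hα : 0 ≤ α) {x a : M} (hx : p.radius ≤ dist x p.center)
    (ha : a ∈ ball p.center p.radius) {θ η : ℝ} (hθ : 0 < θ)
    (hosc : ∀ y ∈ ball x θ, dist (f y) (f x) ≤ η) (hax : dist a x < θ / 2) :
    ‖p.blend a - f a‖ ≤ (2 * α + 4 * δ / θ) * dist a x + 2 * η := by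
  have hρ := p.radius_pos
  have hδ : 0 < δ := hρ.trans_le p.radius_le
  have hη : 0 ≤ η := by simpa using hosc x (mem_ball_self hθ)
  have hbump : ballBump p.center p.radius a * p.radius ≤ 2 * dist a x :=
    (le_div_iff₀ hρ).1 (ballBump_le_of_le_dist hρ hx)
  have hu0 := ballBump_nonneg p.center p.radius a
  have hδx : 0 ≤ 4 * δ / θ * dist a x := by positivity
  rw [norm_blend_sub]
  rcases le_or_gt p.radius (θ / 2) with hsmall | hlarge
  · -- On a small ball `p.sel` stays `α`-close to its value `f p.center ≈ f x` at the centre.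
    have hcx : dist p.center x < θ := by
      linarith [dist_triangle p.center a x, dist_comm p.center a, mem_ball.1 ha]
    have hsel : ‖p.sel a - f a‖ ≤ α * p.radius + 2 * η := by
      linarith [p.norm_sel_sub_le_add hα ha, dist_triangle_right (f p.center) (f a) (f x),
        hosc _ (mem_ball.2 hcx), hosc a (mem_ball.2 (by linarith))]
    calc ballBump p.center p.radius a * ‖p.sel a - f a‖
        ≤ ballBump p.center p.radius a * (α * p.radius + 2 * η) := by gcongr
      _ = (ballBump p.center p.radius a * p.radius) * α
            + ballBump p.center p.radius a * (2 * η) := by ring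
      _ ≤ 2 * dist a x * α + 1 * (2 * η) := by
          gcongr
          exact ballBump_le_one _ _ _
      _ ≤ (2 * α + 4 * δ / θ) * dist a x + 2 * η := by nlinarith
  · -- On a large ball the bump is already small near `x`, where it vanishes.
    calc ballBump p.center p.radius a * ‖p.sel a - f a‖
        ≤ ballBump p.center p.radius a * δ := by gcongr; exact p.norm_sel_sub_le a ha
      _ ≤ 4 * δ / θ * dist a x := by
          rw [div_mul_eq_mul_div, le_div_iff₀ hθ]
          nlinarith [mul_le_mul_of_nonneg_left hbump hδ.le,
            mul_le_mul_of_nonneg_left hlarge.le (mul_nonneg hu0 hδ.le)]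
      _ ≤ (2 * α + 4 * δ / θ) * dist a x + 2 * η := by nlinarith [dist_nonneg (x := a) (y := x)]

open Classical in
noncomputable def glue (T : Set (Patch α φ f E δ c)) (a : M) : X :=
  if h : ∃ p ∈ T, a ∈ ball p.center p.radius then h.choose.blend a else f a

variable (T : Set (Patch α φ f E δ c))

lemma glue_eq_or (a : M) :
    glue T a = f a ∨ ∃ p ∈ T, a ∈ ball p.center p.radius ∧ glue T a = p.blend a := by
  unfold glue
  split_ifs with h
  · exact Or.inr ⟨h.choose, h.choose_spec.1, h.choose_spec.2, rfl⟩
  · exact Or.inl rfl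

lemma glue_eq_self {a : M} (ha : ∀ p ∈ T, a ∉ ball p.center p.radius) : glue T a = f a :=
  dif_neg fun ⟨p, hp, hap⟩ => ha p hp hap

lemma glue_eq_blend (hT : T.PairwiseDisjoint fun p => closedBall p.center p.radius)
    {p : Patch α φ f E δ c} (hp : p ∈ T) {a : M} (ha : a ∈ closedBall p.center p.radius) :
    glue T a = p.blend a := by
  unfold glue
  split_ifs with h
  · rw [hT.elim_set h.choose_spec.1 hp a (ball_subset_closedBall h.choose_spec.2) ha]
  · exact (p.blend_eq_self fun hap => h ⟨p, hp, hap⟩).symm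

lemma norm_glue_sub_le {a : M} {K : ℝ} (hK0 : 0 ≤ K)
    (hK : ∀ p ∈ T, a ∈ ball p.center p.radius → ‖p.sel a - f a‖ ≤ K) :
    ‖glue T a - f a‖ ≤ K := by
  rcases glue_eq_or T a with h | ⟨p, hp, ha, h⟩
  · rwa [h, sub_self, norm_zero]
  · rw [h]
    exact (p.norm_blend_sub_le a).trans (hK p hp ha)

lemma glue_mem (hcv : ∀ a, Convex ℝ (φ a)) (hfs : ∀ a, f a ∈ φ a) (a : M) : glue T a ∈ φ a := by
  rcases glue_eq_or T a with h | ⟨p, -, -, h⟩ <;> rw [h]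
  exacts [hfs a, p.blend_mem hcv hfs a]

lemma eventually_norm_glue_sub_glue_center_le
    (hT : T.PairwiseDisjoint fun p => closedBall p.center p.radius)
    {p : Patch α φ f E δ c} (hp : p ∈ T) :
    ∀ᶠ a in 𝓝 p.center, ‖glue T a - glue T p.center‖ ≤ α * dist a p.center := by
  have hr := half_pos p.radius_pos
  have hglue : ∀ a ∈ closedBall p.center (p.radius / 2), glue T a = p.sel a := fun a ha =>
    (glue_eq_blend T hT hp (closedBall_subset_closedBall (half_le_self p.radius_pos.le) ha)).trans
      (p.blend_eq_sel ha)
  filter_upwards [closedBall_mem_nhds _ hr] with a ha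
  rw [hglue a ha, hglue _ (mem_closedBall_self hr.le)]
  exact p.norm_sel_sub_sel_center_le a (closedBall_subset_ball (half_lt_self p.radius_pos) ha)

lemma continuous_glue (hα : 0 ≤ α) (hf : Continuous f)
    (hT : T.PairwiseDisjoint fun p => closedBall p.center p.radius) : Continuous (glue T) := by
  refine continuous_iff_continuousAt.2 fun x => ?_
  by_cases hx : ∃ p ∈ T, x ∈ ball p.center p.radius
  · obtain ⟨p, hp, hxp⟩ := hx
    refine (p.continuous_blend hf).continuousAt.congr ?_
    filter_upwards [isOpen_ball.mem_nhds hxp] with a ha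
    exact (glue_eq_blend T hT hp (ball_subset_closedBall ha)).symm
  push Not at hx
  have hsmall : Tendsto (fun a => glue T a - f a) (𝓝 x) (𝓝 0) := by
    refine NormedAddGroup.tendsto_nhds_zero.2 fun ε hε => ?_
    obtain ⟨θ, hθ, hosc⟩ := Metric.eventually_nhds_iff_ball.1
      (Metric.tendsto_nhds.1 (hf.tendsto x) (ε / 4) (by positivity))
    have hK : Tendsto (fun a => (2 * α + 4 * δ / θ) * dist a x) (𝓝 x) (𝓝 0) := by
      have hcont : Continuous fun a => (2 * α + 4 * δ / θ) * dist a x := by fun_prop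
      simpa using hcont.tendsto x
    filter_upwards [ball_mem_nhds x (half_pos hθ), hK.eventually_lt_const (half_pos hε)]
      with a hax hKa
    rcases glue_eq_or T a with h | ⟨p, hp, ha, h⟩
    · rwa [h, sub_self, norm_zero]
    · rw [h]
      have := p.norm_blend_sub_le_of_le_dist hα (not_lt.1 (hx p hp)) ha hθ
        (fun y hy => (hosc y hy).le) hax
      linarith
  have hlim : Tendsto (glue T) (𝓝 x) (𝓝 (f x)) := by
    simpa using (hf.tendsto x).add hsmall
  rwa [ContinuousAt, glue_eq_self T hx]

end Patch

end Patches

section Refinement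

variable {M X : Type*}

structure IsRefinement [PseudoMetricSpace M] [PseudoMetricSpace X] (α δ c : ℝ) (f g : M → X)
    (E N : Set M) : Prop where
  dist_le : ∀ a, dist (f a) (g a) ≤ δ
  dist_le_mul_dist : ∀ e ∈ E, ∀ a, dist (f a) (g a) ≤ c * dist a e
  eventually_dist_le : ∀ b ∈ N, ∀ᶠ a in 𝓝 b, dist (g a) (g b) ≤ α * dist a b
  exists_dist_le : ∀ x ∉ closure E, ∃ b ∈ N, dist x b ≤ 2 * δ

variable [MetricSpace M] [NormedAddCommGroup X] {α : ℝ} {φ : M → Set X} {f : M → X}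

lemma exists_patch (hloc : AdmitsLocalStronglyPtwiseLipschitzSelections φ α) (hf : Continuous f)
    (hfs : ∀ a, f a ∈ φ a) {E : Set M} {δ c : ℝ} (hδ : 0 < δ) (hc : 0 < c) {x : M}
    (hx : x ∉ closure E) : ∃ p : Patch α φ f E δ c, p.center = x := by
  obtain ⟨U, hUo, hxU, g, hg, hgs, hgx, hgU⟩ := hloc x (f x) (hfs x)
  obtain ⟨s, hs, hsE⟩ : ∃ s > 0, ∀ e ∈ E, s ≤ dist x e := by
    simpa [Metric.mem_closure_iff] using hx
  have hclose : Tendsto (fun a => ‖g a - f a‖) (𝓝 x) (𝓝 0) := by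
    simpa [hgx] using (hg.sub hf).norm.tendsto x
  obtain ⟨τ, hτ, hτU⟩ := Metric.eventually_nhds_iff_ball.1 (Filter.Eventually.and (hUo.mem_nhds hxU)
    (hclose.eventually_lt_const (lt_min hδ (by positivity : 0 < c * (s / 2)))))
  set ρ := min τ (min δ (s / 2))
  have hρτ : ball x ρ ⊆ ball x τ := ball_subset_ball (min_le_left _ _)
  have hρs : ρ ≤ s / 2 := (min_le_right _ _).trans (min_le_right _ _)
  refine ⟨⟨x, ρ, g, by positivity, (min_le_right _ _).trans (min_le_left _ _), hg, hgs, hgx,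
    fun a ha => ?_, fun a ha => ?_, fun e he a ha => ?_⟩, rfl⟩
  · rw [norm_sub_rev, dist_comm]
    exact hgU a (hτU a (hρτ ha)).1
  · exact (hτU a (hρτ ha)).2.le.trans (min_le_left _ _)
  · have hae : s / 2 ≤ dist a e := by
      linarith [hsE e he, dist_triangle x a e, dist_comm x a, mem_ball.1 ha]
    calc ‖g a - f a‖ ≤ c * (s / 2) := (hτU a (hρτ ha)).2.le.trans (min_le_right _ _)
      _ ≤ c * dist a e := by gcongr

variable [NormedSpace ℝ X]

theorem exists_isRefinement (hα : 0 ≤ α) (hcv : ∀ a, Convex ℝ (φ a))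
    (hloc : AdmitsLocalStronglyPtwiseLipschitzSelections φ α) (hf : Continuous f)
    (hfs : ∀ a, f a ∈ φ a) (E : Set M) {δ c : ℝ} (hδ : 0 < δ) (hc : 0 < c) :
    ∃ g N, Continuous g ∧ (∀ a, g a ∈ φ a) ∧ IsRefinement α δ c f g E N := by
  obtain ⟨T, -, hT, hmeet⟩ := Vitali.exists_disjoint_subfamily_covering_enlargement
    (fun p : Patch α φ f E δ c => closedBall p.center p.radius) univ Patch.radius 2 one_lt_two
    (fun p _ => p.radius_pos.le) δ (fun p _ => p.radius_le)
    (fun p _ => nonempty_closedBall.2 p.radius_pos.le)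
  refine ⟨Patch.glue T, Patch.center '' T, Patch.continuous_glue T hα hf hT,
    Patch.glue_mem T hcv hfs, ⟨fun a => ?_, fun e he a => ?_, ?_, fun x hx => ?_⟩⟩
  · rw [dist_comm, dist_eq_norm]
    exact Patch.norm_glue_sub_le T hδ.le fun p _ ha => p.norm_sel_sub_le a ha
  · rw [dist_comm, dist_eq_norm]
    exact Patch.norm_glue_sub_le T (by positivity) fun p _ ha =>
      p.norm_sel_sub_le_mul_dist e he a ha
  · rintro _ ⟨p, hp, rfl⟩
    simpa only [dist_eq_norm] using Patch.eventually_norm_glue_sub_glue_center_le T hT hp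
  · obtain ⟨p, rfl⟩ := exists_patch hloc hf hfs hδ hc hx
    obtain ⟨q, hq, ⟨y, hyp, hyq⟩, -⟩ := hmeet p (mem_univ p)
    refine ⟨q.center, mem_image_of_mem _ hq, ?_⟩
    calc dist p.center q.center ≤ dist y p.center + dist y q.center := dist_triangle_left _ _ _
      _ ≤ δ + δ := add_le_add ((mem_closedBall.1 hyp).trans p.radius_le)
          ((mem_closedBall.1 hyq).trans q.radius_le)
      _ = 2 * δ := by ring

end Refinement

section RefinementSeq

variable {M X : Type*} [PseudoMetricSpace M] [PseudoMetricSpace X]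

lemma tendsto_div_two_pow (C : ℝ) : Tendsto (fun m : ℕ => C / 2 ^ m) atTop (𝓝 0) :=
  tendsto_const_nhds.div_atTop (tendsto_pow_atTop_atTop_of_one_lt one_lt_two)

lemma exists_tendstoUniformly_of_dist_le_geometric_two {ι Y : Type*} [PseudoMetricSpace Y]
    [CompleteSpace Y] {F : ℕ → ι → Y} {C : ℝ}
    (h : ∀ m a, dist (F m a) (F (m + 1) a) ≤ C / 2 / 2 ^ m) :
    ∃ f, TendstoUniformly F f atTop := by
  choose f hf using fun a => cauchySeq_tendsto_of_complete (cauchySeq_of_le_geometric_two (h · a))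
  refine ⟨f, Metric.tendstoUniformly_iff.2 fun ε hε => ?_⟩
  filter_upwards [(tendsto_div_two_pow C).eventually_lt_const hε] with m hm a
  rw [dist_comm]
  exact (dist_le_of_le_geometric_two_of_tendsto (h · a) (hf a) m).trans_lt hm

structure IsRefinementSeq (α γ : ℝ) (F : ℕ → M → X) (E N : ℕ → Set M) : Prop where
  E_zero : E 0 = ∅
  E_succ : ∀ m, E (m + 1) = E m ∪ N m
  isRefinement : ∀ m,
    IsRefinement α (1 / 2 / 2 ^ m) (γ / 2 / 2 ^ m) (F m) (F (m + 1)) (E m) (N m)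

namespace IsRefinementSeq

variable {α γ : ℝ} {F : ℕ → M → X} {E N : ℕ → Set M} {f : M → X}

lemma monotone (h : IsRefinementSeq α γ F E N) : Monotone E :=
  monotone_nat_of_le_succ fun m => by
    rw [h.E_succ m]
    exact subset_union_left

lemma subset_iUnion (h : IsRefinementSeq α γ F E N) (m : ℕ) : E m ⊆ ⋃ k, N k := by
  induction m with
  | zero => simp [h.E_zero]
  | succ m ih =>
    rw [h.E_succ m]
    exact union_subset ih (Set.subset_iUnion N m)

lemma dist_zero_le (h : IsRefinementSeq α γ F E N)
    (hf : ∀ a, Tendsto (fun m => F m a) atTop (𝓝 (f a))) (a : M) : dist (F 0 a) (f a) ≤ 1 :=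
  dist_le_of_le_geometric_two_of_tendsto₀ (fun m => (h.isRefinement m).dist_le a) (hf a)

lemma dist_le_mul_dist (h : IsRefinementSeq α γ F E N) (hγ : 0 ≤ γ)
    (hf : ∀ a, Tendsto (fun m => F m a) atTop (𝓝 (f a))) {n : ℕ} {e : M} (he : e ∈ E n)
    (a : M) : dist (F n a) (f a) ≤ γ * dist a e := by
  have hstep : ∀ k, dist (F (k + n) a) (F (k + 1 + n) a) ≤ γ * dist a e / 2 / 2 ^ k := by
    intro k
    rw [Nat.add_right_comm]
    calc dist (F (k + n) a) (F (k + n + 1) a) ≤ γ / 2 / 2 ^ (k + n) * dist a e :=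
          (h.isRefinement (k + n)).dist_le_mul_dist e (h.monotone le_add_self he) a
      _ ≤ γ / 2 / 2 ^ k * dist a e := by gcongr <;> simp
      _ = γ * dist a e / 2 / 2 ^ k := by ring
  simpa using dist_le_of_le_geometric_two_of_tendsto₀ hstep ((tendsto_add_atTop_iff_nat n).2 (hf a))

lemma eventually_dist_le (h : IsRefinementSeq α γ F E N) (hγ : 0 ≤ γ)
    (hf : ∀ a, Tendsto (fun m => F m a) atTop (𝓝 (f a))) {m : ℕ} {b : M} (hb : b ∈ N m) :
    ∀ᶠ a in 𝓝 b, dist (f a) (f b) ≤ (α + γ) * dist a b := by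
  have hbE : b ∈ E (m + 1) := h.E_succ m ▸ mem_union_right _ hb
  have hfb := h.dist_le_mul_dist hγ hf hbE b
  rw [dist_self, mul_zero] at hfb
  filter_upwards [(h.isRefinement m).eventually_dist_le b hb] with a ha
  calc dist (f a) (f b)
      ≤ dist (f a) (F (m + 1) a) + dist (F (m + 1) a) (F (m + 1) b) + dist (F (m + 1) b) (f b) :=
        dist_triangle4 _ _ _ _
    _ ≤ γ * dist a b + α * dist a b + 0 := by
        rw [dist_comm]
        gcongr
        exact h.dist_le_mul_dist hγ hf hbE a
    _ = (α + γ) * dist a b := by ring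

lemma dense_iUnion (h : IsRefinementSeq α γ F E N) : Dense (⋃ m, N m) := by
  refine Metric.dense_iff.2 fun x ε hε => ?_
  obtain ⟨m, hm⟩ := ((tendsto_div_two_pow 1).eventually_lt_const hε).exists
  by_cases hx : x ∈ closure (E m)
  · obtain ⟨e, he, hxe⟩ := Metric.mem_closure_iff.1 hx ε hε
    exact ⟨e, mem_ball'.2 hxe, h.subset_iUnion m he⟩
  · obtain ⟨b, hb, hxb⟩ := (h.isRefinement m).exists_dist_le x hx
    refine ⟨b, mem_ball'.2 (hxb.trans_lt ?_), mem_iUnion_of_mem m hb⟩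
    convert hm using 1
    ring

end IsRefinementSeq

end RefinementSeq

section Construction

variable {M X : Type*} [MetricSpace M] [NormedAddCommGroup X] [NormedSpace ℝ X] {α : ℝ}
  {φ : M → Set X} {g : M → X}

theorem exists_isRefinementSeq (hα : 0 ≤ α) (hcv : ∀ a, Convex ℝ (φ a))
    (hloc : AdmitsLocalStronglyPtwiseLipschitzSelections φ α) (hg : Continuous g)
    (hgs : ∀ a, g a ∈ φ a) {γ : ℝ} (hγ : 0 < γ) :
    ∃ F E N, IsRefinementSeq α γ F E N ∧ F 0 = g ∧ (∀ m, Continuous (F m)) ∧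
      ∀ m a, F m a ∈ φ a := by
  let Stage := {p : (M → X) × Set M // Continuous p.1 ∧ ∀ a, p.1 a ∈ φ a}
  have hstep : ∀ (m : ℕ) (p : Stage), ∃ q : Stage, ∃ N, q.1.2 = p.1.2 ∪ N ∧
      IsRefinement α (1 / 2 / 2 ^ m) (γ / 2 / 2 ^ m) p.1.1 q.1.1 p.1.2 N := by
    rintro m ⟨⟨f, E⟩, hf, hfs⟩
    obtain ⟨f', N, hf', hf's, href⟩ :=
      exists_isRefinement hα hcv hloc hf hfs E (δ := 1 / 2 / 2 ^ m) (c := γ / 2 / 2 ^ m)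
        (by positivity) (by positivity)
    exact ⟨⟨(f', E ∪ N), hf', hf's⟩, N, rfl, href⟩
  choose next N hnext using hstep
  let stage : ℕ → Stage := fun m => Nat.rec ⟨(g, ∅), hg, hgs⟩ next m
  exact ⟨fun m => (stage m).1.1, fun m => (stage m).1.2, fun m => N m (stage m),
    ⟨rfl, fun m => (hnext m (stage m)).1, fun m => (hnext m (stage m)).2⟩, rfl,
    fun m => (stage m).2.1, fun m => (stage m).2.2⟩

end Construction

lemma ptwiseLipschitzAt_of_eventually_dist_le {M X : Type*} [PseudoMetricSpace M]
    [PseudoMetricSpace X] {f : M → X} {β : ℝ} {b : M} (hβ : 0 ≤ β)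
    (h : ∀ᶠ a in 𝓝 b, dist (f a) (f b) ≤ β * dist a b) : PtwiseLipschitzAt f β b := by
  obtain ⟨ρ, hρ, hball⟩ := Metric.eventually_nhds_iff_ball.1 h
  refine limsup_le_of_le (by isBoundedDefault) ?_
  filter_upwards [Ioo_mem_nhdsGT hρ] with r ⟨hr, hrρ⟩
  have hsup : ⨆ a ∈ closedBall b r, edist (f b) (f a) ≤ ENNReal.ofReal (β * r) := by
    refine iSup₂_le fun a ha => ?_
    rw [edist_dist, dist_comm]
    exact ENNReal.ofReal_le_ofReal ((hball a (closedBall_subset_ball hrρ ha)).trans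
      (mul_le_mul_of_nonneg_left (mem_closedBall.1 ha) hβ))
  calc (ENNReal.ofReal r)⁻¹ * ⨆ a ∈ closedBall b r, edist (f b) (f a)
      ≤ (ENNReal.ofReal r)⁻¹ * ENNReal.ofReal (β * r) := by gcongr
    _ = ENNReal.ofReal β := by
      rw [ENNReal.ofReal_mul hβ, mul_comm, mul_assoc,
        ENNReal.mul_inv_cancel (by simpa using hr) ENNReal.ofReal_ne_top, mul_one]

theorem stmt1_general {M X : Type*} [MetricSpace M] [NormedAddCommGroup X] [NormedSpace ℝ X]
    [CompleteSpace X] (α : ℝ) (hα : 0 ≤ α) (φ : M → Set X)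
    (hcl : ∀ a, IsClosed (φ a)) (hcv : ∀ a, Convex ℝ (φ a))
    (hloc : AdmitsLocalStronglyPtwiseLipschitzSelections φ α)
    (hsel : ∃ g : M → X, Continuous g ∧ (∀ a, g a ∈ φ a) ∧ Bornology.IsBounded (Set.range g))
    (β : ℝ) (hβ : α < β) :
    ∃ f : M → X, Continuous f ∧ (∀ a, f a ∈ φ a) ∧ Bornology.IsBounded (Set.range f) ∧
      ∃ B : Set M, Dense B ∧ ∀ b ∈ B, PtwiseLipschitzAt f β b := by
  obtain ⟨g, hg, hgs, hgb⟩ := hsel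
  have hγ : 0 < β - α := sub_pos.2 hβ
  obtain ⟨F, E, N, hseq, rfl, hFc, hFs⟩ := exists_isRefinementSeq hα hcv hloc hg hgs hγ
  obtain ⟨f, hFf⟩ := exists_tendstoUniformly_of_dist_le_geometric_two
    fun m => (hseq.isRefinement m).dist_le
  have hlim := hFf.tendsto_at
  refine ⟨f, hFf.continuous (Eventually.of_forall hFc).frequently,
    fun a => (hcl a).mem_of_tendsto (hlim a) (Eventually.of_forall fun m => hFs m a), ?_,
    ⋃ m, N m, hseq.dense_iUnion, ?_⟩
  · refine (hgb.cthickening (δ := 1)).subset (range_subset_iff.2 fun a => ?_)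
    exact mem_cthickening_of_dist_le _ _ 1 _ (mem_range_self a)
      (by rw [dist_comm]; exact hseq.dist_zero_le hlim a)
  · simp only [mem_iUnion]
    rintro b ⟨m, hb⟩
    refine ptwiseLipschitzAt_of_eventually_dist_le (hα.trans hβ.le) ?_
    simpa using hseq.eventually_dist_le hγ.le hlim hb

/-- **Pointwise Lipschitz Selection Theorem, bounded version.** -/
theorem stmt1 {M X : Type*} [MetricSpace M] [NormedAddCommGroup X] [NormedSpace ℝ X]
    [CompleteSpace X] (α : ℝ) (hα : 0 ≤ α) (φ : M → Set X)
    (hne : ∀ a, (φ a).Nonempty) (hcl : ∀ a, IsClosed (φ a)) (hcv : ∀ a, Convex ℝ (φ a))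
    (hloc : AdmitsLocalStronglyPtwiseLipschitzSelections φ α)
    (hsel : ∃ g : M → X, Continuous g ∧ (∀ a, g a ∈ φ a) ∧ Bornology.IsBounded (Set.range g))
    (β : ℝ) (hβ : α < β) :
    ∃ f : M → X, Continuous f ∧ (∀ a, f a ∈ φ a) ∧ Bornology.IsBounded (Set.range f) ∧
      ∃ B : Set M, Dense B ∧ ∀ b ∈ B, PtwiseLipschitzAt f β b :=
  stmt1_general α hα φ hcl hcv hloc hsel β hβ
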